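/- arXiv:2512.09298 — 2 statements merged into one kernel-verified Lean document; each statement's English description precedes it below -/
import Mathlib

section
/- Let 0 < a < 1, k = a/(1−a), and ψ(x) = −k sin(πx/a) on [0,a], ψ(x) = sin(π(x−a)/(1−a)) on [a,1]. Then ∫₀¹ ψ(x) sin(πx) dx = (1−2a) sin(aπ) / (a(2−a)(1−a)²(1+a)π). In particular this integral is strictly positive when 0 < a < 1/2. -/
open Real

lemma aux_int (c e p q : ℝ) (h1 : c - π ≠ 0) (h2 : c + π ≠ 0) :
    ∫ x in p..q, Real.sin (c*x+e) * Real.sin (π*x) =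
      (Real.sin ((c-π)*q+e)/(2*(c-π)) - Real.sin ((c+π)*q+e)/(2*(c+π)))
      - (Real.sin ((c-π)*p+e)/(2*(c-π)) - Real.sin ((c+π)*p+e)/(2*(c+π))) := by
  have key : ∀ x : ℝ, HasDerivAt
      (fun x => Real.sin ((c-π)*x+e)/(2*(c-π)) - Real.sin ((c+π)*x+e)/(2*(c+π)))
      (Real.sin (c*x+e) * Real.sin (π*x)) x := by
    intro x
    have hl : HasDerivAt (fun x : ℝ => (c-π)*x+e) (c-π) x := by
      simpa using ((hasDerivAt_id x).const_mul (c-π)).add_const e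
    have hl2 : HasDerivAt (fun x : ℝ => (c+π)*x+e) (c+π) x := by
      simpa using ((hasDerivAt_id x).const_mul (c+π)).add_const e
    have H := ((hl.sin).div_const (2*(c-π))).sub ((hl2.sin).div_const (2*(c+π)))
    have simp1 : ∀ y : ℝ, Real.cos y * (c-π) / (2*(c-π)) = Real.cos y / 2 := by
      intro y; field_simp
    have simp2 : ∀ y : ℝ, Real.cos y * (c+π) / (2*(c+π)) = Real.cos y / 2 := by
      intro y; field_simp
    have trig : ∀ A B : ℝ, Real.cos (A - B) / 2 - Real.cos (A + B) / 2
        = Real.sin A * Real.sin B := by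
      intro A B; rw [Real.cos_sub, Real.cos_add]; ring
    refine H.congr_deriv ?_
    rw [simp1, simp2,
      show (c-π)*x+e = (c*x+e) - π*x from by ring,
      show (c+π)*x+e = (c*x+e) + π*x from by ring]
    exact trig (c*x+e) (π*x)
  have hcont : Continuous fun x => Real.sin (c*x+e) * Real.sin (π*x) := by
    fun_prop
  exact intervalIntegral.integral_eq_sub_of_hasDerivAt (fun x _ => key x)
    (hcont.intervalIntegrable p q)

theorem stmt_7 (a : ℝ) (ha : 0 < a) (ha1 : a < 1)
    (k : ℝ) (hk : k = a / (1 - a))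
    (ψ : ℝ → ℝ)
    (hψ : ∀ x : ℝ, ψ x = if x ≤ a then -k * Real.sin (π * x / a)
      else Real.sin (π * (x - a) / (1 - a))) :
    (∫ x in (0:ℝ)..1, ψ x * Real.sin (π * x)) =
      (1 - 2 * a) * Real.sin (a * π) / (a * (2 - a) * (1 - a) ^ 2 * (1 + a) * π) ∧
    (a < 1 / 2 → 0 < ∫ x in (0:ℝ)..1, ψ x * Real.sin (π * x)) := by
  have ha0 : a ≠ 0 := ne_of_gt ha
  have h1a : (1:ℝ) - a ≠ 0 := by linarith
  have h1a' : (0:ℝ) < 1 - a := by linarith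
  have hpi : (0:ℝ) < π := Real.pi_pos
  have hpi0 : π ≠ 0 := ne_of_gt hpi
  -- the two rewriting functions
  set f1 : ℝ → ℝ := fun x => -k * (Real.sin ((π/a)*x + 0) * Real.sin (π*x)) with hf1
  set f2 : ℝ → ℝ := fun x => Real.sin ((π/(1-a))*x + (-(π*a)/(1-a))) * Real.sin (π*x) with hf2
  have heq1 : Set.EqOn (fun x => ψ x * Real.sin (π*x)) f1 (Set.uIcc 0 a) := by
    intro x hx
    rw [Set.uIcc_of_le (le_of_lt ha)] at hx
    have hxa : x ≤ a := hx.2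
    simp only [hf1]
    rw [hψ x, if_pos hxa]
    have : π * x / a = (π/a)*x + 0 := by field_simp; try ring
    rw [this]
    ring
  have heq2 : Set.EqOn (fun x => ψ x * Real.sin (π*x)) f2 (Set.uIcc a 1) := by
    intro x hx
    rw [Set.uIcc_of_le (le_of_lt ha1)] at hx
    simp only [hf2]
    rw [hψ x]
    by_cases hxa : x ≤ a
    · have hxe : x = a := le_antisymm hxa hx.1
      rw [if_pos hxa, hxe]
      have e1 : π * a / a = π := by field_simp
      have e2 : (π/(1-a))*a + (-(π*a)/(1-a)) = 0 := by field_simp; ring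
      rw [e1, e2, Real.sin_pi, Real.sin_zero]
      ring
    · rw [if_neg hxa]
      have : π * (x - a) / (1 - a) = (π/(1-a))*x + (-(π*a)/(1-a)) := by
        field_simp; ring
      rw [this]
  have hc1 : Continuous f1 := by fun_prop
  have hc2 : Continuous f2 := by fun_prop
  have hint1 : IntervalIntegrable (fun x => ψ x * Real.sin (π*x)) MeasureTheory.volume 0 a :=
    ((hc1.continuousOn).congr heq1).intervalIntegrable
  have hint2 : IntervalIntegrable (fun x => ψ x * Real.sin (π*x)) MeasureTheory.volume a 1 :=
    ((hc2.continuousOn).congr heq2).intervalIntegrable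
  -- nonzeroness of the frequency differences
  have d1 : π/a - π ≠ 0 := by
    have : π/a - π = π*(1-a)/a := by field_simp
    rw [this]; positivity
  have d2 : π/a + π ≠ 0 := by positivity
  have d3 : π/(1-a) - π ≠ 0 := by
    have : π/(1-a) - π = π*a/(1-a) := by field_simp; ring
    rw [this]; positivity
  have d4 : π/(1-a) + π ≠ 0 := by positivity
  have d1' : 2*(π/a - π) ≠ 0 := by simpa using d1
  have d2' : 2*(π/a + π) ≠ 0 := by simpa using d2
  have d3' : 2*(π/(1-a) - π) ≠ 0 := by simpa using d3
  have d4' : 2*(π/(1-a) + π) ≠ 0 := by simpa using d4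
  have hconv : (∫ x in (0:ℝ)..1, ψ x * Real.sin (π * x)) =
      (1 - 2 * a) * Real.sin (a * π) / (a * (2 - a) * (1 - a) ^ 2 * (1 + a) * π) := by
    rw [← intervalIntegral.integral_add_adjacent_intervals hint1 hint2,
      intervalIntegral.integral_congr heq1, intervalIntegral.integral_congr heq2]
    simp only [hf1, hf2]
    rw [intervalIntegral.integral_const_mul, aux_int (π/a) 0 0 a d1 d2,
      aux_int (π/(1-a)) (-(π*a)/(1-a)) a 1 d3 d4]
    rw [show (π/a - π)*a + 0 = π - π*a by field_simp; try ring,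
        show (π/a + π)*a + 0 = π + π*a by field_simp; try ring,
        show (π/a - π)*0 + 0 = 0 by ring,
        show (π/a + π)*0 + 0 = 0 by ring,
        show (π/(1-a) - π)*1 + (-(π*a)/(1-a)) = 0 by field_simp; try ring,
        show (π/(1-a) + π)*1 + (-(π*a)/(1-a)) = 2*π by field_simp; try ring,
        show (π/(1-a) - π)*a + (-(π*a)/(1-a)) = -(π*a) by field_simp; try ring,
        show (π/(1-a) + π)*a + (-(π*a)/(1-a)) = π*a by field_simp; ring]
    rw [Real.sin_pi_sub, Real.sin_zero, Real.sin_two_pi, Real.sin_neg,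
      show Real.sin (π + π*a) = -Real.sin (π*a) by
        rw [Real.sin_add, Real.sin_pi, Real.cos_pi]; ring,
      show Real.sin (a*π) = Real.sin (π*a) by rw [mul_comm]]
    rw [hk]
    have h2a : (2:ℝ) - a ≠ 0 := by linarith
    have h1a2 : (1:ℝ) + a ≠ 0 := by linarith
    have t1 : ∀ s : ℝ, s/(2*(π/a - π)) = s*a/(2*π*(1-a)) := by
      intro s
      rw [div_eq_div_iff d1' (by positivity)]
      field_simp
    have t2 : ∀ s : ℝ, s/(2*(π/a + π)) = s*a/(2*π*(1+a)) := by
      intro s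
      rw [div_eq_div_iff d2' (by positivity)]
      field_simp
    have t3 : ∀ s : ℝ, s/(2*(π/(1-a) - π)) = s*(1-a)/(2*π*a) := by
      intro s
      rw [div_eq_div_iff d3' (by positivity)]
      field_simp
      ring
    have t4 : ∀ s : ℝ, s/(2*(π/(1-a) + π)) = s*(1-a)/(2*π*(2-a)) := by
      intro s
      rw [div_eq_div_iff d4' (by positivity)]
      field_simp
      ring
    simp only [t1, t2, t3, t4]
    field_simp
    ring
  refine ⟨hconv, fun h2 => ?_⟩
  rw [hconv]
  apply div_pos
  · apply mul_pos (by linarith)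
    apply Real.sin_pos_of_pos_of_lt_pi
    · positivity
    · nlinarith
  · have h2a : (0:ℝ) < 2 - a := by linarith
    positivity
end

section
/- Let 0 < a < 1/2, k = a/(1−a), ψ(x) = −k sin(πx/a) on [0,a], ψ(x) = sin(π(x−a)/(1−a)) on [a,1], and ω > 0 with b⁺ = π²/(a²ω), b⁻ = π²/((1−a)²ω). Then u(x,t) = e^{−ωt}ψ(x) satisfies: ∂ₜu(x,t) > 0 and b⁺·∂ₜu = ∂ₓₓu for x ∈ (0,a), t > 0; and ∂ₜu(x,t) < 0 and b⁻·∂ₜu = ∂ₓₓu for x ∈ (a,1), t > 0. Hence u solves the elasto-plastic equation b(∂ₜu)∂ₜu = ∂ₓₓu with b(s) = b⁻ for s < 0, b(s) = b⁺ for s ≥ 0. -/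
open Real

theorem stmt_9 (a : ℝ) (ha : 0 < a) (ha2 : a < 1 / 2)
    (k : ℝ) (hk : k = a / (1 - a))
    (ψ : ℝ → ℝ)
    (hψ : ∀ x : ℝ, ψ x = if x ≤ a then -k * Real.sin (π * x / a)
      else Real.sin (π * (x - a) / (1 - a)))
    (ω : ℝ) (hω : 0 < ω)
    (bm bp : ℝ) (hbp : bp = π ^ 2 / (a ^ 2 * ω)) (hbm : bm = π ^ 2 / ((1 - a) ^ 2 * ω))
    (b : ℝ → ℝ) (hb : ∀ s : ℝ, b s = if s < 0 then bm else bp)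
    (u : ℝ → ℝ → ℝ) (hu : ∀ x t, u x t = Real.exp (-ω * t) * ψ x) :
    (∀ x ∈ Set.Ioo 0 a, ∀ t : ℝ, 0 < t →
      0 < deriv (u x) t ∧
      bp * deriv (u x) t = deriv (deriv (fun y => u y t)) x) ∧
    (∀ x ∈ Set.Ioo a 1, ∀ t : ℝ, 0 < t →
      deriv (u x) t < 0 ∧
      bm * deriv (u x) t = deriv (deriv (fun y => u y t)) x) ∧
    (∀ x ∈ Set.Ioo 0 a ∪ Set.Ioo a 1, ∀ t : ℝ, 0 < t →
      b (deriv (u x) t) * deriv (u x) t = deriv (deriv (fun y => u y t)) x) := by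
  have ha1 : (0:ℝ) < 1 - a := by linarith
  have ha0 : a ≠ 0 := ne_of_gt ha
  have ha1' : (1:ℝ) - a ≠ 0 := ne_of_gt ha1
  have hω0 : ω ≠ 0 := ne_of_gt hω
  have hk0 : 0 < k := by rw [hk]; positivity
  -- time derivative
  have hdt : ∀ x t : ℝ, deriv (u x) t = -ω * Real.exp (-ω*t) * ψ x := by
    intro x t
    have hlin : HasDerivAt (fun s : ℝ => -ω * s) (-ω) t := by
      simpa using (hasDerivAt_id t).const_mul (-ω)
    have h1 : HasDerivAt (fun t => Real.exp (-ω*t)) (Real.exp (-ω*t) * (-ω)) t :=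
      (Real.hasDerivAt_exp _).comp t hlin
    have h2 := h1.mul_const (ψ x)
    have heq : u x = fun t => Real.exp (-ω*t) * ψ x := funext fun t => hu x t
    rw [heq]
    rw [h2.deriv]; ring
  -- spatial second derivative on (0, a)
  have key_p : ∀ x ∈ Set.Ioo (0:ℝ) a, ∀ t : ℝ,
      deriv (deriv (fun y => u y t)) x
        = Real.exp (-ω*t) * (k * (π/a)^2 * Real.sin (π/a * x)) := by
    intro x hx t
    set C := Real.exp (-ω*t) with hC
    set f1 : ℝ → ℝ := fun y => C * (-k * Real.sin (π/a * y)) with hf1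
    set f2 : ℝ → ℝ := fun y => C * (-k * (π/a * Real.cos (π/a * y))) with hf2
    have hd1 : ∀ y : ℝ, HasDerivAt f1 (f2 y) y := by
      intro y
      have hlin : HasDerivAt (fun y : ℝ => π/a * y) (π/a) y := by
        simpa using (hasDerivAt_id y).const_mul (π/a)
      have hs : HasDerivAt (fun y => Real.sin (π/a * y)) (Real.cos (π/a*y) * (π/a)) y :=
        (Real.hasDerivAt_sin _).comp y hlin
      have := (hs.const_mul (-k)).const_mul C
      refine this.congr_deriv ?_
      simp only [hf2]; ring
    have hd2 : HasDerivAt f2 (C * (k * (π/a)^2 * Real.sin (π/a * x))) x := by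
      have hlin : HasDerivAt (fun y : ℝ => π/a * y) (π/a) x := by
        simpa using (hasDerivAt_id x).const_mul (π/a)
      have hc : HasDerivAt (fun y => Real.cos (π/a * y)) (-Real.sin (π/a*x) * (π/a)) x :=
        (Real.hasDerivAt_cos _).comp x hlin
      have := ((hc.const_mul (π/a)).const_mul (-k)).const_mul C
      refine this.congr_deriv ?_
      ring
    have hloc : ∀ z ∈ Set.Iio a, deriv (fun y => u y t) z = f2 z := by
      intro z hz
      have hev : (fun y => u y t) =ᶠ[nhds z] f1 := by
        filter_upwards [Iio_mem_nhds hz] with y hy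
        rw [hu, hψ, if_pos (le_of_lt hy), show π * y / a = π/a * y by ring]
      rw [hev.deriv_eq, (hd1 z).deriv]
    have hev2 : deriv (fun y => u y t) =ᶠ[nhds x] f2 := by
      filter_upwards [Iio_mem_nhds hx.2] with z hz using hloc z hz
    rw [hev2.deriv_eq, hd2.deriv]
  -- spatial second derivative on (a, 1)
  have key_m : ∀ x ∈ Set.Ioi a, ∀ t : ℝ,
      deriv (deriv (fun y => u y t)) x
        = -(Real.exp (-ω*t) * ((π/(1-a))^2 * Real.sin (π/(1-a) * (x - a)))) := by
    intro x hx t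
    set C := Real.exp (-ω*t) with hC
    set c : ℝ := π/(1-a) with hc'
    set f1 : ℝ → ℝ := fun y => C * Real.sin (c * (y - a)) with hf1
    set f2 : ℝ → ℝ := fun y => C * (c * Real.cos (c * (y - a))) with hf2
    have hlin : ∀ y : ℝ, HasDerivAt (fun y : ℝ => c * (y - a)) c y := by
      intro y
      simpa using ((hasDerivAt_id y).sub_const a).const_mul c
    have hd1 : ∀ y : ℝ, HasDerivAt f1 (f2 y) y := by
      intro y
      have hs : HasDerivAt (fun y => Real.sin (c * (y - a))) (Real.cos (c*(y-a)) * c) y :=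
        (Real.hasDerivAt_sin _).comp y (hlin y)
      have := hs.const_mul C
      refine this.congr_deriv ?_
      simp only [hf2]; ring
    have hd2 : HasDerivAt f2 (-(C * (c^2 * Real.sin (c * (x - a))))) x := by
      have hco : HasDerivAt (fun y => Real.cos (c * (y - a))) (-Real.sin (c*(x-a)) * c) x :=
        (Real.hasDerivAt_cos _).comp x (hlin x)
      have := (hco.const_mul c).const_mul C
      refine this.congr_deriv ?_
      ring
    have hloc : ∀ z ∈ Set.Ioi a, deriv (fun y => u y t) z = f2 z := by
      intro z hz
      have hev : (fun y => u y t) =ᶠ[nhds z] f1 := by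
        filter_upwards [Ioi_mem_nhds hz] with y hy
        rw [hu, hψ, if_neg (not_le.mpr hy), show π * (y - a) / (1-a) = c * (y - a) by
          rw [hc']; ring]
      rw [hev.deriv_eq, (hd1 z).deriv]
    have hev2 : deriv (fun y => u y t) =ᶠ[nhds x] f2 := by
      filter_upwards [Ioi_mem_nhds hx] with z hz using hloc z hz
    rw [hev2.deriv_eq, hd2.deriv]
  -- part 1
  have part1 : ∀ x ∈ Set.Ioo (0:ℝ) a, ∀ t : ℝ, 0 < t →
      0 < deriv (u x) t ∧
      bp * deriv (u x) t = deriv (deriv (fun y => u y t)) x := by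
    intro x hx t _
    have hsin : 0 < Real.sin (π * x / a) := by
      apply Real.sin_pos_of_pos_of_lt_pi
      · have hx0 : 0 < x := hx.1
        positivity
      · rw [div_lt_iff₀ ha]
        nlinarith [Real.pi_pos, hx.1, hx.2]
    have hψx : ψ x = -k * Real.sin (π * x / a) := by rw [hψ, if_pos hx.2.le]
    have hE : 0 < Real.exp (-ω*t) := Real.exp_pos _
    constructor
    · rw [hdt, hψx]
      have : -ω * Real.exp (-ω*t) * (-k * Real.sin (π*x/a))
          = ω * Real.exp (-ω*t) * (k * Real.sin (π*x/a)) := by ring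
      rw [this]; positivity
    · rw [hdt, hψx, key_p x hx t, hbp, show π/a * x = π * x / a by ring]
      field_simp
  -- part 2
  have part2 : ∀ x ∈ Set.Ioo a (1:ℝ), ∀ t : ℝ, 0 < t →
      deriv (u x) t < 0 ∧
      bm * deriv (u x) t = deriv (deriv (fun y => u y t)) x := by
    intro x hx t _
    have hsin : 0 < Real.sin (π * (x - a) / (1 - a)) := by
      apply Real.sin_pos_of_pos_of_lt_pi
      · have : 0 < x - a := by linarith [hx.1]
        positivity
      · rw [div_lt_iff₀ ha1]
        nlinarith [Real.pi_pos, hx.1, hx.2]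
    have hψx : ψ x = Real.sin (π * (x - a) / (1 - a)) := by
      rw [hψ, if_neg (not_le.mpr hx.1)]
    have hE : 0 < Real.exp (-ω*t) := Real.exp_pos _
    constructor
    · rw [hdt, hψx]
      have : -ω * Real.exp (-ω*t) * Real.sin (π*(x-a)/(1-a))
          = -(ω * Real.exp (-ω*t) * Real.sin (π*(x-a)/(1-a))) := by ring
      rw [this]
      have : 0 < ω * Real.exp (-ω*t) * Real.sin (π*(x-a)/(1-a)) := by positivity
      linarith
    · rw [hdt, hψx, key_m x hx.1 t, show π/(1-a) * (x-a) = π * (x-a) / (1-a) by ring]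
      rw [hbm]
      field_simp
  refine ⟨part1, part2, ?_⟩
  intro x hx t ht
  rcases hx with hx | hx
  · obtain ⟨h1, h2⟩ := part1 x hx t ht
    rw [hb, if_neg (not_lt.mpr h1.le)]
    exact h2
  · obtain ⟨h1, h2⟩ := part2 x hx t ht
    rw [hb, if_pos h1]
    exact h2
end
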